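/- arXiv:2007.15932 — 4 statements merged into one kernel-verified Lean document; each statement's English description precedes it below -/
import Mathlib

section
/- For every rectangular EW-tableau T with m rows and n columns, the pair φ(T) = (R, ℓ) produced by the map φ is a labelled ribbon parallelogram polyomino of type (m,n); that is, φ maps EW_{m,n} into LRib_{m,n}. -/
/- Combinatorial objects from "EW-tableaux and parallelogram polyominoes".
A tableau of type `(m+1, n+1)` (i.e. with `m+1` rows and `n+1` columns) is a
0/1-filling, encoded as a function to `Bool` (`true` = 1).  Rows are indexed
top to bottom, columns left to right, both starting at `0`.  The row labelled
`v i` (for `i < m+1`) and the column labelled `v ((m+1)+j)` (for `j < n+1`)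
are recorded through permutations `rl`, `cl` of `Fin (m+1)`, `Fin (n+1)`. -/

namespace EWPaper

/-- A 0/1 tableau with `m+1` rows and `n+1` columns; `true` encodes the entry 1. -/
abbrev Tab (m n : ℕ) := Fin (m + 1) → Fin (n + 1) → Bool

variable {m n : ℕ}

/-- A rectangular EW-tableau: the top row is all 1s, every other row contains a 0,
and no four cells forming the corners of a rectangle carry 0s in two diagonally
opposite corners and 1s in the other two. -/
def IsEW (T : Tab m n) : Prop :=
  (∀ j, T 0 j = true) ∧
  (∀ i : Fin (m + 1), i ≠ 0 → ∃ j, T i j = false) ∧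
  (∀ (i i' : Fin (m + 1)) (j j' : Fin (n + 1)), i ≠ i' → j ≠ j' →
    T i j = true → T i' j' = true → (T i j' = true ∨ T i' j = true))

/-- The (0-based) column index of the leftmost 1 of row `i`. -/
noncomputable def leftmost (T : Tab m n) (i : Fin (m + 1)) : ℕ :=
  sInf {j : ℕ | ∃ h : j < n + 1, T i ⟨j, h⟩ = true}

/-- The (0-based) column index of the rightmost 1 of row `i`. -/
noncomputable def rightmost (T : Tab m n) (i : Fin (m + 1)) : ℕ :=
  sSup {j : ℕ | ∃ h : j < n + 1, T i ⟨j, h⟩ = true}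

/-- The (0-based) row index of the topmost 1 of column `j`. -/
noncomputable def topmost (T : Tab m n) (j : Fin (n + 1)) : ℕ :=
  sInf {i : ℕ | ∃ h : i < m + 1, T ⟨i, h⟩ j = true}

/-- Parallelogram polyomino (as a 0/1 tableau): 1s in the two corners `(1,1)` and
`(m,n)`; every row has a nonempty contiguous set of 1s; leftmost and rightmost 1s
of the rows move weakly to the right going down. -/
def IsPara (T : Tab m n) : Prop :=
  T 0 0 = true ∧ T (Fin.last m) (Fin.last n) = true ∧
  (∀ i, ∃ j, T i j = true) ∧
  (∀ (i : Fin (m + 1)) (j j' j'' : Fin (n + 1)),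
    j ≤ j' → j' ≤ j'' → T i j = true → T i j'' = true → T i j' = true) ∧
  (∀ i i' : Fin (m + 1), i ≤ i' → leftmost T i ≤ leftmost T i') ∧
  (∀ i i' : Fin (m + 1), i ≤ i' → rightmost T i ≤ rightmost T i')

/-- The number of 1s of a tableau. -/
def ones (T : Tab m n) : ℕ :=
  (Finset.univ.filter fun p : Fin (m + 1) × Fin (n + 1) => T p.1 p.2 = true).card

/-- Ribbon parallelogram polyomino: a parallelogram polyomino of type `(m+1, n+1)`
with the minimal number `(m+1) + (n+1) - 1` of 1s. -/
def IsRib (T : Tab m n) : Prop := IsPara T ∧ ones T = m + n + 1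

/-- A row- and column-labelled tableau: row `i` carries the label `v (rl i)` and
column `j` carries the label `v ((m+1) + cl j)`. -/
structure Labelled (m n : ℕ) where
  T : Tab m n
  rl : Equiv.Perm (Fin (m + 1))
  cl : Equiv.Perm (Fin (n + 1))

/-- Labelled parallelogram polyomino: the underlying tableau is a parallelogram
polyomino, the top row is labelled `v 0`, rows whose leftmost 1s are the same
distance from the left side have labels increasing top to bottom, and columns
whose topmost 1s are at the same height have labels increasing left to right. -/
def IsLPara (D : Labelled m n) : Prop :=
  IsPara D.T ∧ D.rl 0 = 0 ∧
  (∀ i i' : Fin (m + 1), leftmost D.T i = leftmost D.T i' → i < i' → D.rl i < D.rl i') ∧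
  (∀ j j' : Fin (n + 1), topmost D.T j = topmost D.T j' → j < j' → D.cl j < D.cl j')

/-- Labelled ribbon parallelogram polyomino. -/
def IsLRib (D : Labelled m n) : Prop := IsLPara D ∧ ones D.T = m + n + 1

/-- Step 1 of `φ`: the stable sort of the columns by their number of 1s, ascending
(so that in an EW-tableau only 0s lie to the left of every 0), ties (identical
columns) broken by original label, increasing left to right. -/
def sortCols (T : Tab m n) : Equiv.Perm (Fin (n + 1)) :=
  Tuple.sort fun j => (Finset.univ.filter fun i => T i j = true).card

/-- Step 2 of `φ`: the stable sort of the rows by their number of 0s, ascending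
(so that in an EW-tableau only 1s lie above every 1), ties (identical rows)
broken by original label, increasing top to bottom. -/
def sortRows (T : Tab m n) : Equiv.Perm (Fin (m + 1)) :=
  Tuple.sort fun i => (Finset.univ.filter fun j => T i j = false).card

/-- The tableau `T'` of Steps 1–2 of `φ`. -/
def sortedTab (T : Tab m n) : Tab m n := fun i j => T (sortRows T i) (sortCols T j)

/-- Step 4 of `φ`: `R i j = 1` iff (`T' i j = 1` and (`i = m` or `T' (i+1) j = 0`)) or
(`T' i j = 0` and (`j = n` or `T' i (j+1) = 1`)). -/
def step4 (S : Tab m n) : Tab m n := fun i j =>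
  (S i j && decide (∀ i' : Fin (m + 1), (i' : ℕ) = (i : ℕ) + 1 → S i' j = false)) ||
  (!S i j && decide (∀ j' : Fin (n + 1), (j' : ℕ) = (j : ℕ) + 1 → S i j' = true))

/-- The map `φ`: sort rows and columns, apply Step 4, and remember, as the
labelling, where each row and column of the original tableau went. -/
def phi (T : Tab m n) : Labelled m n :=
  ⟨step4 (sortedTab T), sortRows T, sortCols T⟩

/-- The tableau `T'` of the definition of `ψ`:
`T'_{ij} = 1` iff `(i,j) = (1,1)` or there is `k < j` with `R i k = 1`. -/
def psiPre (R : Tab m n) : Tab m n := fun i j =>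
  decide ((i = 0 ∧ j = 0) ∨ ∃ k : Fin (n + 1), k < j ∧ R i k = true)

/-- The map `ψ`: form `psiPre` of the underlying tableau and permute rows and
columns so that row and column labels are increasing (row `i` of the result is
the row of `psiPre D.T` labelled `v i`, and similarly for columns). -/
def psi (D : Labelled m n) : Tab m n := fun i j =>
  psiPre D.T (D.rl.symm i) (D.cl.symm j)

/-- The entry of `T` at `(i, j)` is a cornersupport entry: there is a
non-attacking entry with the opposite value at `(i', j')` such that the
other two corners `(i', j)` and `(i, j')` carry the same value as `(i, j)`. -/
def Cornersupport (T : Tab m n) (i : Fin (m + 1)) (j : Fin (n + 1)) : Prop :=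
  ∃ (i' : Fin (m + 1)) (j' : Fin (n + 1)),
    i' ≠ i ∧ j' ≠ j ∧ T i' j' ≠ T i j ∧ T i' j = T i j ∧ T i j' = T i j

instance (T : Tab m n) (i : Fin (m + 1)) (j : Fin (n + 1)) :
    Decidable (Cornersupport T i j) := by
  unfold Cornersupport; infer_instance

/-- `η` of the row labelled `v i`: the number of non-cornersupport 0s in row `i`. -/
def etaRow (T : Tab m n) (i : Fin (m + 1)) : ℕ :=
  (Finset.univ.filter fun j => T i j = false ∧ ¬ Cornersupport T i j).card

/-- `η` of the column labelled `v ((m+1)+j)`: the number of non-cornersupport 1s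
in column `j`. -/
def etaCol (T : Tab m n) (j : Fin (n + 1)) : ℕ :=
  (Finset.univ.filter fun i => T i j = true ∧ ¬ Cornersupport T i j).card

/-- A marked/decorated rectangular EW-tableau: a tableau together with a
decoration value for each row below the first (recorded as `arow`, with the
normalisation `arow 0 = 0` for the unmarked top row) and each column (`acol`). -/
structure MEW (m n : ℕ) where
  T : Tab m n
  arow : Fin (m + 1) → ℕ
  acol : Fin (n + 1) → ℕ

/-- Membership in `MEW_{m+1,n+1}`: the tableau is an EW-tableau and the
decorations satisfy `0 ≤ a_i ≤ η_i(T) - 1`. -/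
def IsMEW (M : MEW m n) : Prop :=
  IsEW M.T ∧ M.arow 0 = 0 ∧
  (∀ i : Fin (m + 1), i ≠ 0 → M.arow i < etaRow M.T i) ∧
  (∀ j : Fin (n + 1), M.acol j < etaCol M.T j)

/-- The expansion `⟨D, ζ⟩` of a labelled ribbon parallelogram polyomino `D` by a
surplus vector `ζ` (indexed by labels): the row labelled `v i` gets `ζ i` cells
appended to the left of its leftmost 1, the column labelled `v ((m+1)+j)` gets
`ζ' j` cells appended above its topmost 1; the rows and columns are then
reordered so as to satisfy the labelling convention (sorted by the position of
the new leftmost/topmost 1, ties broken by increasing label) and the interior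
is completed with 1s. -/
noncomputable def expand (D : Labelled m n)
    (zrow : Fin (m + 1) → ℕ) (zcol : Fin (n + 1) → ℕ) : Labelled m n :=
  let ell : Fin (m + 1) → ℕ := fun x => leftmost D.T x - zrow (D.rl x)
  let top : Fin (n + 1) → ℕ := fun y => topmost D.T y - zcol (D.cl y)
  let σ : Equiv.Perm (Fin (m + 1)) := Tuple.sort fun x => toLex (ell x, (D.rl x : ℕ))
  let τ : Equiv.Perm (Fin (n + 1)) := Tuple.sort fun y => toLex (top y, (D.cl y : ℕ))
  ⟨fun i j => decide (ell (σ i) ≤ (j : ℕ) ∧ top (τ j) ≤ (i : ℕ)),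
    σ.trans D.rl, τ.trans D.cl⟩

/-- The map `Φ` from marked EW-tableaux to labelled parallelogram polyominoes:
`Φ(T, a) = ⟨φ(T), ζ⟩` where `ζ_i = η_i(T) - a_i - 1`. -/
noncomputable def Phi (M : MEW m n) : Labelled m n :=
  expand (phi M.T) (fun i => etaRow M.T i - M.arow i - 1)
    (fun j => etaCol M.T j - M.acol j - 1)

/-- ℕ-indexed version of `rightmost` (junk value for out-of-range rows). -/
noncomputable def rmaxN (P : Tab m n) (i : ℕ) : ℕ :=
  sSup {j : ℕ | ∃ (hi : i < m + 1) (hj : j < n + 1), P ⟨i, hi⟩ ⟨j, hj⟩ = true}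

/-- The lowest 1 of column `j` (ℕ-indexed, junk value for out-of-range columns). -/
noncomputable def bmaxN (P : Tab m n) (j : ℕ) : ℕ :=
  sSup {i : ℕ | ∃ (hi : i < m + 1) (hj : j < n + 1), P ⟨i, hi⟩ ⟨j, hj⟩ = true}

/-- The rows of the successive horizontal segments of the bounce path of `P`:
start in row 0; having arrived in row `i`, move right to the rightmost 1 of
row `i` and then down to the lowest 1 of that column. -/
noncomputable def bncI (P : Tab m n) : ℕ → ℕ
  | 0 => 0
  | k + 1 => bmaxN P (rmaxN P (bncI P k))

/-- The columns of the successive vertical segments of the bounce path of `P`. -/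
noncomputable def bncJ (P : Tab m n) (k : ℕ) : ℕ := rmaxN P (bncI P k)

/-- The cell `(i, j)` is visited by the bounce path of `P`: it lies on the `k`-th
horizontal segment (row `bncI k`, columns `bncJ (k-1)` to `bncJ k`, starting at
column 0 when `k = 0`) or on the `k`-th vertical segment (column `bncJ k`, rows
`bncI k` to `bncI (k+1)`) for some `k`. -/
def BounceCell (P : Tab m n) (i j : ℕ) : Prop :=
  ∃ k : ℕ,
    (i = bncI P k ∧ (match k with | 0 => 0 | k' + 1 => bncJ P k') ≤ j ∧ j ≤ bncJ P k) ∨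
    (j = bncJ P k ∧ bncI P k ≤ i ∧ i ≤ bncI P (k + 1))

/-- The bounce path of `P`, as the 0/1 tableau whose 1s are exactly the cells
visited by the bounce path. -/
noncomputable def bounceTab (P : Tab m n) : Tab m n := fun i j =>
  @decide (BounceCell P (i : ℕ) (j : ℕ)) (Classical.propDecidable _)

/-- `rl'` is the row labelling of the bounce ribbon of `D` induced by `D`:
within each class of rows of `bounce D.T` having their leftmost 1 in the same
column, the labels increase top to bottom, and each such class carries the same
set of labels as it does under the labelling of `D`. -/
def InducedRows (D : Labelled m n) (rl' : Equiv.Perm (Fin (m + 1))) : Prop :=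
  (∀ i i' : Fin (m + 1), leftmost (bounceTab D.T) i = leftmost (bounceTab D.T) i' →
    i < i' → rl' i < rl' i') ∧
  (∀ c : ℕ,
    (Finset.univ.filter fun i => leftmost (bounceTab D.T) i = c).image rl' =
    (Finset.univ.filter fun i => leftmost (bounceTab D.T) i = c).image D.rl)

/-- `cl'` is the column labelling of the bounce ribbon of `D` induced by `D`. -/
def InducedCols (D : Labelled m n) (cl' : Equiv.Perm (Fin (n + 1))) : Prop :=
  (∀ j j' : Fin (n + 1), topmost (bounceTab D.T) j = topmost (bounceTab D.T) j' →
    j < j' → cl' j < cl' j') ∧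
  (∀ c : ℕ,
    (Finset.univ.filter fun j => topmost (bounceTab D.T) j = c).image cl' =
    (Finset.univ.filter fun j => topmost (bounceTab D.T) j = c).image D.cl)

/-- The surplus of the row label `v i`: the position of the leftmost 1 of the row
of the bounce ribbon labelled `v i` minus the position of the leftmost 1 of the
row of `D` labelled `v i`. -/
noncomputable def surpRow (D : Labelled m n) (rl' : Equiv.Perm (Fin (m + 1)))
    (i : Fin (m + 1)) : ℤ :=
  (leftmost (bounceTab D.T) (rl'.symm i) : ℤ) - (leftmost D.T (D.rl.symm i) : ℤ)

/-- The surplus of the column label `v ((m+1)+j)`. -/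
noncomputable def surpCol (D : Labelled m n) (cl' : Equiv.Perm (Fin (n + 1)))
    (j : Fin (n + 1)) : ℤ :=
  (topmost (bounceTab D.T) (cl'.symm j) : ℤ) - (topmost D.T (D.cl.symm j) : ℤ)

/- The forbidden rectangle pattern of an EW-tableau says exactly that no two columns have
incomparable sets of 1s. Sorting the columns by their number of 1s therefore turns every
row into `0…01…1`, and sorting the rows by their number of 0s gives a staircase: row `i`
has its first 1 in column `z i`, with `z` weakly increasing. In row `i`, Step 4 keeps its
last 0 and those of its 1s with a 0 below, i.e. the columns `z i - 1, …, z (i + 1) - 1`.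
These intervals form a ribbon, and their lengths `z (i + 1) - z i + 1` telescope to
`m + n + 1`. The labels increase within classes because both sorts are stable. -/

open Finset

theorem monotone_comp_sort_card {α : Type*} {N : ℕ} (f : Fin N → Finset α)
    (hf : ∀ a b, f a ⊆ f b ∨ f b ⊆ f a) :
    Monotone (f ∘ Tuple.sort fun a => #(f a)) := by
  intro a b hab
  have hcard : #(f (Tuple.sort _ a)) ≤ #(f (Tuple.sort _ b)) :=
    Tuple.monotone_sort (fun a => #(f a)) hab
  rcases hf (Tuple.sort (fun a => #(f a)) a) (Tuple.sort (fun a => #(f a)) b) with h | h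
  · exact h
  · exact (eq_of_subset_of_card_le h hcard).symm.subset

theorem sum_range_sub_pred_eq {z : ℕ → ℕ} (hz : Monotone z) (h0 : z 0 = 0) (h1 : 0 < z 1)
    (k : ℕ) : ∑ i ∈ range (k + 1), (z (i + 1) - (z i - 1)) = z (k + 1) + k := by
  induction k with
  | zero => simp [h0]
  | succ k ih =>
    rw [sum_range_succ, ih]
    have := hz (Nat.le_add_right (k + 1) 1)
    have := h1.trans_le (hz (Nat.le_add_left 1 k))
    omega

theorem ones_eq_sum (T : Tab m n) : ones T = ∑ i, #{j | T i j = true} := by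
  rw [ones, card_filter, Fintype.sum_prod_type]
  simp only [card_filter]

/-- Row `i` of `S` is `0…01…1` with its first 1 in column `z i`; the value
`z (m + 1) = n + 1` stands for an all-0 row below the tableau. -/
structure IsStaircase (S : Tab m n) (z : ℕ → ℕ) : Prop where
  mono : Monotone z
  zero : z 0 = 0
  pos_one : 0 < z 1
  last : z (m + 1) = n + 1
  apply_eq_true_iff : ∀ i j, S i j = true ↔ z i ≤ j

def colOnes (T : Tab m n) (j : Fin (n + 1)) : Finset (Fin (m + 1)) := {i | T i j = true}

def rowZeros (T : Tab m n) (i : Fin (m + 1)) : Finset (Fin (n + 1)) := {j | T i j = false}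

namespace IsStaircase

variable {S : Tab m n} {z : ℕ → ℕ}

theorem apply_le (hS : IsStaircase S z) {i : ℕ} (hi : i ≤ m + 1) : z i ≤ n + 1 :=
  hS.last ▸ hS.mono hi

theorem pos (hS : IsStaircase S z) {i : ℕ} (hi : i ≠ 0) : 0 < z i :=
  hS.pos_one.trans_le (hS.mono (Nat.one_le_iff_ne_zero.2 hi))

theorem step4_eq_true_iff (hS : IsStaircase S z) (i : Fin (m + 1)) (j : Fin (n + 1)) :
    step4 S i j = true ↔ z i - 1 ≤ j ∧ j ≤ z (i + 1) - 1 := by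
  have hzi : z i ≤ n + 1 := hS.apply_le (by omega)
  have hmono : z i ≤ z (i + 1) := hS.mono (Nat.le_add_right _ 1)
  have hpos : 0 < z (i + 1) := hS.pos (by omega)
  have hbelow : (∀ i' : Fin (m + 1), (i' : ℕ) = i + 1 → S i' j = false) ↔ j < z (i + 1) := by
    by_cases hi : (i : ℕ) < m
    · constructor
      · intro h
        simpa [← Bool.not_eq_true, hS.apply_eq_true_iff] using h ⟨i + 1, by omega⟩ rfl
      · rintro h i' hi'
        simp only [← Bool.not_eq_true, hS.apply_eq_true_iff, hi']
        omega
    · constructor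
      · intro
        rw [show (i : ℕ) + 1 = m + 1 by omega, hS.last]
        omega
      · intro _ i' hi'
        omega
  have hright : (∀ j' : Fin (n + 1), (j' : ℕ) = j + 1 → S i j' = true) ↔ z i ≤ j + 1 := by
    by_cases hj : (j : ℕ) < n
    · constructor
      · intro h
        simpa [hS.apply_eq_true_iff] using h ⟨j + 1, by omega⟩ rfl
      · intro h j' hj'
        rw [hS.apply_eq_true_iff]
        omega
    · constructor
      · intro
        omega
      · intro _ j' hj'
        omega
  simp only [step4, Bool.or_eq_true, Bool.and_eq_true, Bool.not_eq_true', decide_eq_true_eq]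
  rw [hbelow, hright]
  simp only [Bool.eq_false_iff, ne_eq, hS.apply_eq_true_iff]
  omega

theorem setOf_step4_row (hS : IsStaircase S z) (i : Fin (m + 1)) :
    {j : ℕ | ∃ h : j < n + 1, step4 S i ⟨j, h⟩ = true} = Set.Icc (z i - 1) (z (i + 1) - 1) := by
  ext j
  have := hS.apply_le (i := i + 1) (by omega)
  simp only [Set.mem_ofPred_eq, Set.mem_Icc, hS.step4_eq_true_iff]
  exact ⟨fun ⟨_, h⟩ => h, fun h => ⟨by omega, h⟩⟩

theorem leftmost_step4 (hS : IsStaircase S z) (i : Fin (m + 1)) :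
    leftmost (step4 S) i = z i - 1 := by
  rw [leftmost, hS.setOf_step4_row]
  exact csInf_Icc (Nat.sub_le_sub_right (hS.mono (Nat.le_add_right _ 1)) 1)

theorem rightmost_step4 (hS : IsStaircase S z) (i : Fin (m + 1)) :
    rightmost (step4 S) i = z (i + 1) - 1 := by
  rw [rightmost, hS.setOf_step4_row]
  exact csSup_Icc (Nat.sub_le_sub_right (hS.mono (Nat.le_add_right _ 1)) 1)

theorem topmost_step4_add_one (hS : IsStaircase S z) (j : Fin (n + 1)) :
    topmost (step4 S) j + 1 = #(colOnes S j) := by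
  set g := #(colOnes S j)
  have hg : ∀ i (hi : i < m + 1), i < g ↔ z i ≤ j := fun i hi =>
    (Fin.lt_card_filter_univ_iff_apply_of_imp (j := ⟨i, hi⟩) (fun i => S i j = true)
      fun a b hba ha => by
        rw [hS.apply_eq_true_iff] at ha ⊢
        exact (hS.mono hba).trans ha).trans (hS.apply_eq_true_iff _ _)
  have hg0 : 0 < g := (hg 0 (by omega)).2 (by simp [hS.zero])
  have hgm : g ≤ m + 1 := card_le_univ _ |>.trans (by simp)
  have hj := j.isLt
  suffices IsLeast {i : ℕ | ∃ h : i < m + 1, step4 S ⟨i, h⟩ j = true} (g - 1) by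
    rw [topmost, this.csInf_eq]
    omega
  refine ⟨⟨by omega, (hS.step4_eq_true_iff _ _).2 ?_⟩, ?_⟩
  · show z (g - 1) - 1 ≤ j ∧ j ≤ z (g - 1 + 1) - 1
    have hzg : z (g - 1) ≤ j := (hg _ (by omega)).1 (by omega)
    have hjz : j < z (g - 1 + 1) := by
      rw [show g - 1 + 1 = g by omega]
      rcases Nat.lt_or_ge g (m + 1) with hgm' | hgm'
      · exact Nat.lt_of_not_le fun h => lt_irrefl g ((hg g hgm').2 h)
      · rw [show g = m + 1 by omega, hS.last]
        omega
    omega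
  · rintro i ⟨hi, h⟩
    have hij := ((hS.step4_eq_true_iff _ _).1 h).2
    dsimp only at hij
    by_contra hlt
    have := (hg (i + 1) (by omega)).1 (by omega)
    have := hS.pos (i := i + 1) (by omega)
    omega

theorem card_step4_row (hS : IsStaircase S z) (i : Fin (m + 1)) :
    #{j | step4 S i j = true} = z (i + 1) - (z i - 1) := by
  have hlt : z (i + 1) - 1 < n + 1 := by have := hS.apply_le (i := i + 1) (by omega); omega
  have hmono : z i ≤ z (i + 1) := hS.mono (Nat.le_add_right _ 1)
  have hpos : 0 < z (i + 1) := hS.pos (by omega)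
  have : ({j | step4 S i j = true} : Finset (Fin (n + 1))) =
      Icc ⟨z i - 1, by omega⟩ ⟨z (i + 1) - 1, hlt⟩ := by
    ext j
    simp [hS.step4_eq_true_iff, Fin.le_def]
  rw [this, Fin.card_Icc]
  dsimp only
  omega

theorem ones_step4 (hS : IsStaircase S z) : ones (step4 S) = m + n + 1 := by
  rw [ones_eq_sum, Fintype.sum_congr _ _ hS.card_step4_row,
    Fin.sum_univ_eq_sum_range (fun i => z (i + 1) - (z i - 1)),
    sum_range_sub_pred_eq hS.mono hS.zero hS.pos_one, hS.last]
  omega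

theorem isPara_step4 (hS : IsStaircase S z) : IsPara (step4 S) := by
  have hle : ∀ i : Fin (m + 1), z i - 1 < n + 1 := fun i => by
    have := hS.apply_le (i := i) (by omega); omega
  refine ⟨?_, ?_, fun i => ⟨⟨z i - 1, hle i⟩, ?_⟩, ?_, fun i i' h => ?_, fun i i' h => ?_⟩
  · simp [hS.step4_eq_true_iff, hS.zero]
  · have := hS.apply_le (i := m) (by omega)
    simp only [hS.step4_eq_true_iff, Fin.val_last, hS.last]
    omega
  · have := hS.mono (Nat.le_add_right i 1)
    rw [hS.step4_eq_true_iff]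
    dsimp only
    omega
  · intro i j j' j'' hj hj' h h''
    rw [hS.step4_eq_true_iff] at h h'' ⊢
    rw [Fin.le_def] at hj hj'
    omega
  · rw [hS.leftmost_step4, hS.leftmost_step4]
    exact Nat.sub_le_sub_right (hS.mono h) 1
  · rw [hS.rightmost_step4, hS.rightmost_step4]
    exact Nat.sub_le_sub_right (hS.mono (Nat.succ_le_succ h)) 1

end IsStaircase

theorem monotone_card_rowZeros_sortRows (T : Tab m n) :
    Monotone fun i => #(rowZeros T (sortRows T i)) :=
  Tuple.monotone_sort fun i => #(rowZeros T i)

theorem sortRows_lt_sortRows (T : Tab m n) {i i' : Fin (m + 1)} (h : i < i')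
    (heq : #(rowZeros T (sortRows T i)) = #(rowZeros T (sortRows T i'))) :
    sortRows T i < sortRows T i' :=
  (Tuple.eq_sort_iff.mp rfl).2 i i' h heq

theorem sortCols_lt_sortCols (T : Tab m n) {j j' : Fin (n + 1)} (h : j < j')
    (heq : #(colOnes T (sortCols T j)) = #(colOnes T (sortCols T j'))) :
    sortCols T j < sortCols T j' :=
  (Tuple.eq_sort_iff.mp rfl).2 j j' h heq

theorem card_rowZeros_sortedTab (T : Tab m n) (i : Fin (m + 1)) :
    #(rowZeros (sortedTab T) i) = #(rowZeros T (sortRows T i)) :=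
  card_equiv (sortCols T) fun _ => by simp only [rowZeros, mem_filter, mem_univ, true_and]; rfl

theorem card_colOnes_sortedTab (T : Tab m n) (j : Fin (n + 1)) :
    #(colOnes (sortedTab T) j) = #(colOnes T (sortCols T j)) :=
  card_equiv (sortRows T) fun _ => by simp only [colOnes, mem_filter, mem_univ, true_and]; rfl

variable {T : Tab m n}

theorem IsEW.colOnes_total (hT : IsEW T) (j j' : Fin (n + 1)) :
    colOnes T j ⊆ colOnes T j' ∨ colOnes T j' ⊆ colOnes T j := by
  by_contra! h
  simp only [not_subset, colOnes, mem_filter, mem_univ, true_and, Bool.not_eq_true] at h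
  obtain ⟨⟨i, hij, hij'⟩, i', hi'j', hi'j⟩ := h
  have hii : i ≠ i' := by rintro rfl; simp_all
  have hjj : j ≠ j' := by rintro rfl; simp_all
  rcases hT.2.2 i i' j j' hii hjj hij hi'j' with h | h <;> simp_all

theorem IsEW.card_rowZeros_zero (hT : IsEW T) : #(rowZeros T 0) = 0 :=
  card_eq_zero.2 (filter_eq_empty_iff.2 fun j _ => by simp [hT.1 j])

theorem IsEW.card_rowZeros_pos (hT : IsEW T) {i : Fin (m + 1)} (hi : i ≠ 0) :
    0 < #(rowZeros T i) :=
  let ⟨j, hj⟩ := hT.2.1 i hi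
  card_pos.2 ⟨j, by simp [rowZeros, hj]⟩

theorem IsEW.sortRows_zero (hT : IsEW T) : sortRows T 0 = 0 := by
  have hkey := monotone_card_rowZeros_sortRows T (Fin.zero_le ((sortRows T).symm 0))
  simp only [Equiv.apply_symm_apply] at hkey
  by_contra h
  have := hT.card_rowZeros_pos h
  have := hT.card_rowZeros_zero
  omega

theorem IsEW.sortedTab_eq_true_of_le (hT : IsEW T) {i : Fin (m + 1)} {j j' : Fin (n + 1)}
    (hjj : j ≤ j') (h : sortedTab T i j = true) : sortedTab T i j' = true := by
  have hmono : Monotone fun j => colOnes T (sortCols T j) :=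
    monotone_comp_sort_card (colOnes T) hT.colOnes_total
  have hmem : sortRows T i ∈ colOnes T (sortCols T j) := by simpa [colOnes, sortedTab] using h
  simpa [colOnes, sortedTab] using hmono hjj hmem

/-- The column of the first 1 in row `i` of `sortedTab T`; rows past the last are all 0s. -/
def firstOne (T : Tab m n) (i : ℕ) : ℕ :=
  if h : i < m + 1 then #(rowZeros T (sortRows T ⟨i, h⟩)) else n + 1

theorem firstOne_val (T : Tab m n) (i : Fin (m + 1)) :
    firstOne T i = #(rowZeros T (sortRows T i)) := by
  simp [firstOne, i.isLt]

theorem IsEW.sortedTab_eq_true_iff (hT : IsEW T) (i : Fin (m + 1)) (j : Fin (n + 1)) :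
    sortedTab T i j = true ↔ firstOne T i ≤ j := by
  rw [firstOne_val, ← card_rowZeros_sortedTab, ← not_lt, rowZeros,
    Fin.lt_card_filter_univ_iff_apply_of_imp, Bool.not_eq_false]
  intro a b hba hb
  contrapose! hb
  simpa using hT.sortedTab_eq_true_of_le hba (by simpa using hb)

theorem IsEW.isStaircase_sortedTab (hT : IsEW T) : IsStaircase (sortedTab T) (firstOne T) where
  mono := monotone_nat_of_le_succ fun i => by
    by_cases h : i + 1 < m + 1
    · have := monotone_card_rowZeros_sortRows T
        (show (⟨i, by omega⟩ : Fin (m + 1)) ≤ ⟨i + 1, h⟩ from Fin.mk_le_mk.2 (by omega))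
      simpa [firstOne, h, show i < m + 1 by omega] using this
    · by_cases h' : i < m + 1
      · simpa [firstOne, h, h'] using card_le_univ (rowZeros T (sortRows T ⟨i, h'⟩))
      · simp [firstOne, h, h']
  zero := by simpa [firstOne, Fin.mk_zero, hT.sortRows_zero] using hT.card_rowZeros_zero
  pos_one := by
    unfold firstOne
    split_ifs with h
    · refine hT.card_rowZeros_pos fun h0 => ?_
      have := (sortRows T).injective (h0.trans hT.sortRows_zero.symm)
      simp [Fin.ext_iff] at this
    · omega
  last := by simp [firstOne]
  apply_eq_true_iff := hT.sortedTab_eq_true_iff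

theorem IsEW.sortRows_lt_of_leftmost_eq (hT : IsEW T) {i i' : Fin (m + 1)}
    (h : leftmost (step4 (sortedTab T)) i = leftmost (step4 (sortedTab T)) i') (hii : i < i') :
    sortRows T i < sortRows T i' := by
  rw [hT.isStaircase_sortedTab.leftmost_step4, hT.isStaircase_sortedTab.leftmost_step4,
    firstOne_val, firstOne_val] at h
  have hle := monotone_card_rowZeros_sortRows T hii.le
  by_cases heq : #(rowZeros T (sortRows T i)) = #(rowZeros T (sortRows T i'))
  · exact sortRows_lt_sortRows T hii heq
  · -- counts `0` and `1` give the same leftmost 1, and only the top row has no 0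
    have h0 : sortRows T i = 0 := by
      by_contra h0
      have := hT.card_rowZeros_pos h0
      simp only at hle
      omega
    rw [h0]
    exact Fin.pos_of_ne_zero fun h' => hii.ne ((sortRows T).injective (h0.trans h'.symm))

theorem IsEW.sortCols_lt_of_topmost_eq (hT : IsEW T) {j j' : Fin (n + 1)}
    (h : topmost (step4 (sortedTab T)) j = topmost (step4 (sortedTab T)) j') (hjj : j < j') :
    sortCols T j < sortCols T j' := by
  apply sortCols_lt_sortCols T hjj
  rw [← card_colOnes_sortedTab, ← card_colOnes_sortedTab,
    ← hT.isStaircase_sortedTab.topmost_step4_add_one,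
    ← hT.isStaircase_sortedTab.topmost_step4_add_one, h]

/-- For every rectangular EW-tableau `T` with `m+1` rows and
`n+1` columns, `φ(T)` is a labelled ribbon parallelogram polyomino of type
`(m+1, n+1)`: `φ` maps `EW` into `LRib`. -/
theorem phi_mem_LRib {m n : ℕ} (T : Tab m n) (hT : IsEW T) :
    IsLRib (phi T) :=
  ⟨⟨hT.isStaircase_sortedTab.isPara_step4, hT.sortRows_zero,
    fun _ _ => hT.sortRows_lt_of_leftmost_eq, fun _ _ => hT.sortCols_lt_of_topmost_eq⟩,
    hT.isStaircase_sortedTab.ones_step4⟩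

end EWPaper
end

section
/- The map Φ : MEW_{m,n} → LPara_{m,n} is injective: if M₁ = (T₁,a) and M₂ = (T₂,b) are marked rectangular EW-tableaux with Φ(M₁) = Φ(M₂), then T₁ = T₂ and a = b. -/
/- Combinatorial objects from "EW-tableaux and parallelogram polyominoes".
A tableau of type `(m+1, n+1)` (i.e. with `m+1` rows and `n+1` columns) is a
0/1-filling, encoded as a function to `Bool` (`true` = 1).  Rows are indexed
top to bottom, columns left to right, both starting at `0`.  The row labelled
`v i` (for `i < m+1`) and the column labelled `v ((m+1)+j)` (for `j < n+1`)
are recorded through permutations `rl`, `cl` of `Fin (m+1)`, `Fin (n+1)`. -/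

namespace EWPaper

variable {m n : ℕ}

/-! Label the rows and columns of `Φ(T, a)` by those of `T`. The row labelled `v i` starts
(has its leftmost 1) after the cornersupport zeros of row `i` of `T` plus `a_i` more cells,
and dually for columns, so `Φ(M₁) = Φ(M₂)` gives equal row and column starts. Since the rows of
an EW-tableau are nested, `T i j = 1` exactly when the number of rows with fewer zeros than
row `i` is at most the start of column `j`. The function `v ↦ #{rows with fewer than v zeros}`
can be rebuilt from the starts one step at a time, by following the bounce path of `Φ(T, a)`.
It then fixes each row's zero count, since that is the first value above the row's start where
the function jumps. This recovers `T`, and then `a` as start minus cornersupport count. -/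

open Finset

theorem card_filter_comp_equiv {α β : Type*} [Fintype α] [Fintype β] (e : α ≃ β) (p : β → Prop)
    [DecidablePred p] : #{x | p (e x)} = #{y | p y} :=
  card_equiv e (by simp)

theorem card_filter_lt_le_symm_apply {N : ℕ} {α : Type*} [LinearOrder α] {f : Fin N → α}
    {ρ : Equiv.Perm (Fin N)} (hρ : Monotone (f ∘ ρ)) (r : Fin N) :
    #{x | f x < f r} ≤ ρ.symm r := by
  rw [← Fin.card_Iio]
  refine card_le_card_of_injOn ρ.symm (fun x hx => ?_) ρ.symm.injective.injOn
  simp only [coe_filter, mem_univ, true_and, coe_Iio, Set.mem_Iio] at hx ⊢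
  by_contra hle
  have := hρ (not_lt.1 hle)
  simp only [Function.comp_apply, Equiv.apply_symm_apply] at this
  exact absurd hx (not_lt.2 this)

theorem eq_true_of_card_le {α β : Type*} [Fintype β] {f : α → β → Bool}
    (hf : ∀ a a' b b', a ≠ a' → b ≠ b' → f a b = true → f a' b' = true →
      f a b' = true ∨ f a' b = true)
    {a a' : α} (h : #{b | f a b = true} ≤ #{b | f a' b = true}) {b : β} (hb : f a b = true) :
    f a' b = true := by
  by_contra hb'
  have hsub : univ.filter (fun b => f a' b = true) ⊆ univ.filter fun b => f a b = true := by
    intro b' hb''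
    simp only [mem_filter, mem_univ, true_and] at hb'' ⊢
    have hne : b ≠ b' := fun e => hb' (e ▸ hb'')
    exact (hf a a' b b' (fun e => hb' (e ▸ hb)) hne hb hb'').resolve_right hb'
  have := card_lt_card ((ssubset_iff_of_subset hsub).2 ⟨b, by simp [hb], by simp [hb']⟩)
  omega

def zeroCount (T : Tab m n) (i : Fin (m + 1)) : ℕ := #{j | T i j = false}

def oneCount (T : Tab m n) (j : Fin (n + 1)) : ℕ := #{i | T i j = true}

theorem card_true_add_zeroCount (T : Tab m n) (i : Fin (m + 1)) :
    #{j | T i j = true} + zeroCount T i = n + 1 := by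
  simpa [zeroCount] using card_filter_add_card_filter_not (s := univ) (fun j => T i j = true)

theorem zeroCount_le (T : Tab m n) (i : Fin (m + 1)) : zeroCount T i ≤ n + 1 := by
  have := card_true_add_zeroCount T i
  omega

theorem oneCount_le (T : Tab m n) (j : Fin (n + 1)) : oneCount T j ≤ m + 1 :=
  (card_le_univ _).trans (by simp)

theorem exists_eq_true_eq_false_of_zeroCount_lt {T : Tab m n} {i i' : Fin (m + 1)}
    (h : zeroCount T i < zeroCount T i') : ∃ j, T i j = true ∧ T i' j = false := by
  by_contra! hcon
  refine absurd (card_le_card fun j hj => ?_) (not_le.2 h)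
  simp only [mem_filter, mem_univ, true_and] at hj ⊢
  by_contra hij
  exact hcon j (by simpa using hij) hj

namespace IsEW

variable {T : Tab m n}

theorem eq_true_of_zeroCount_le (hT : IsEW T) {i i' : Fin (m + 1)}
    (h : zeroCount T i ≤ zeroCount T i') {j : Fin (n + 1)} (hj : T i' j = true) :
    T i j = true := by
  refine eq_true_of_card_le hT.2.2 ?_ hj
  have := card_true_add_zeroCount T i
  have := card_true_add_zeroCount T i'
  omega

theorem eq_true_of_oneCount_le (hT : IsEW T) {j j' : Fin (n + 1)}
    (h : oneCount T j ≤ oneCount T j') {i : Fin (m + 1)} (hi : T i j = true) :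
    T i j' = true :=
  eq_true_of_card_le (f := fun j i => T i j)
    (fun _ _ _ _ hj hi h₁ h₂ => (hT.2.2 _ _ _ _ hi hj h₁ h₂).symm) h hi

theorem zeroCount_eq_zero_iff (hT : IsEW T) {i : Fin (m + 1)} : zeroCount T i = 0 ↔ i = 0 := by
  constructor
  · intro h
    by_contra hi
    obtain ⟨j, hj⟩ := hT.2.1 i hi
    exact absurd h (card_pos.2 ⟨j, by simp [hj]⟩).ne'
  · rintro rfl
    simp [zeroCount, hT.1]

end IsEW

def csZeroCount (T : Tab m n) (i : Fin (m + 1)) : ℕ :=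
  #{j | T i j = false ∧ Cornersupport T i j}

def csOneCount (T : Tab m n) (j : Fin (n + 1)) : ℕ :=
  #{i | T i j = true ∧ Cornersupport T i j}

theorem etaRow_add_csZeroCount (T : Tab m n) (i : Fin (m + 1)) :
    etaRow T i + csZeroCount T i = zeroCount T i := by
  rw [etaRow, csZeroCount, zeroCount, ← filter_filter, ← filter_filter, add_comm]
  exact card_filter_add_card_filter_not _

theorem etaCol_add_csOneCount (T : Tab m n) (j : Fin (n + 1)) :
    etaCol T j + csOneCount T j = oneCount T j := by
  rw [etaCol, csOneCount, oneCount, ← filter_filter, ← filter_filter, add_comm]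
  exact card_filter_add_card_filter_not _

def zeroProfile (T : Tab m n) (v : ℕ) : ℕ := #{i | zeroCount T i < v}

/-- The column of the leftmost 1 of the row labelled `v i` in `Φ(T, a)`. -/
def rowStart (M : MEW m n) (i : Fin (m + 1)) : ℕ := csZeroCount M.T i + M.arow i

/-- The row of the topmost 1 of the column labelled `v ((m+1)+j)` in `Φ(T, a)`. -/
def colStart (M : MEW m n) (j : Fin (n + 1)) : ℕ := csOneCount M.T j + M.acol j

namespace IsEW

variable {T : Tab m n}

/-- A row with fewer zeros than row `i` has its zeros among the cornersupport zeros of row `i`. -/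
theorem zeroCount_le_csZeroCount (hT : IsEW T) {i i' : Fin (m + 1)}
    (h : zeroCount T i' < zeroCount T i) : zeroCount T i' ≤ csZeroCount T i := by
  obtain ⟨j', hj'₁, hj'₂⟩ := exists_eq_true_eq_false_of_zeroCount_lt h
  refine card_le_card fun j hj => ?_
  simp only [mem_filter, mem_univ, true_and] at hj ⊢
  have hij : T i j = false := by
    by_contra hij
    exact absurd (hT.eq_true_of_zeroCount_le h.le (by simpa using hij)) (by simp [hj])
  refine ⟨hij, i', j', fun e => h.ne (e ▸ rfl), fun e => by simp_all, ?_, ?_, ?_⟩ <;>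
    simp [hij, hj, hj'₁, hj'₂]

theorem zeroProfile_le_csOneCount (hT : IsEW T) {i : Fin (m + 1)} {j : Fin (n + 1)}
    (h : T i j = true) : zeroProfile T (zeroCount T i) ≤ csOneCount T j := by
  refine card_le_card fun i' hi' => ?_
  simp only [mem_filter, mem_univ, true_and] at hi' ⊢
  obtain ⟨j', hj'₁, hj'₂⟩ := exists_eq_true_eq_false_of_zeroCount_lt hi'
  have hi'j : T i' j = true := hT.eq_true_of_zeroCount_le hi'.le h
  refine ⟨hi'j, i, j', fun e => hi'.ne (e ▸ rfl), fun e => by simp_all, ?_, ?_, ?_⟩ <;>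
    simp [h, hi'j, hj'₁, hj'₂]

theorem oneCount_le_zeroProfile (hT : IsEW T) {i : Fin (m + 1)} {j : Fin (n + 1)}
    (h : T i j = false) : oneCount T j ≤ zeroProfile T (zeroCount T i) := by
  refine card_le_card fun i' hi' => ?_
  simp only [mem_filter, mem_univ, true_and] at hi' ⊢
  by_contra hle
  simpa [h] using hT.eq_true_of_zeroCount_le (not_lt.1 hle) hi'

theorem zeroProfile_one (hT : IsEW T) : zeroProfile T 1 = 1 := by
  refine card_eq_one.2 ⟨0, ?_⟩
  ext i
  simp [hT.zeroCount_eq_zero_iff]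

end IsEW

namespace IsMEW

variable {M : MEW m n}

theorem rowStart_zero (hM : IsMEW M) : rowStart M 0 = 0 := by
  have := etaRow_add_csZeroCount M.T 0
  rw [hM.1.zeroCount_eq_zero_iff.2 rfl] at this
  simp only [rowStart, hM.2.1]
  omega

theorem rowStart_lt_zeroCount (hM : IsMEW M) {i : Fin (m + 1)} (hi : i ≠ 0) :
    rowStart M i < zeroCount M.T i := by
  have := etaRow_add_csZeroCount M.T i
  have := hM.2.2.1 i hi
  simp only [rowStart]
  omega

theorem colStart_lt_oneCount (hM : IsMEW M) (j : Fin (n + 1)) :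
    colStart M j < oneCount M.T j := by
  have := etaCol_add_csOneCount M.T j
  have := hM.2.2.2 j
  simp only [colStart]
  omega

theorem zeroCount_le_rowStart (hM : IsMEW M) {i i' : Fin (m + 1)}
    (h : zeroCount M.T i' < zeroCount M.T i) : zeroCount M.T i' ≤ rowStart M i :=
  (hM.1.zeroCount_le_csZeroCount h).trans (Nat.le_add_right _ _)

theorem eq_true_iff_zeroProfile_le (hM : IsMEW M) (i : Fin (m + 1)) (j : Fin (n + 1)) :
    M.T i j = true ↔ zeroProfile M.T (zeroCount M.T i) ≤ colStart M j := by
  refine ⟨fun h => (hM.1.zeroProfile_le_csOneCount h).trans (Nat.le_add_right _ _),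
    fun h => ?_⟩
  by_contra hij
  have := hM.1.oneCount_le_zeroProfile (i := i) (j := j) (by simpa using hij)
  have := hM.colStart_lt_oneCount j
  omega

theorem colStart_lt_zeroProfile (hM : IsMEW M) {i : Fin (m + 1)} {j : Fin (n + 1)}
    (h : M.T i j = false) : colStart M j < zeroProfile M.T (zeroCount M.T i) :=
  not_le.1 fun hle => by simp [(hM.eq_true_iff_zeroProfile_le i j).2 hle] at h

theorem card_colStart_lt_zeroProfile (hM : IsMEW M) (i : Fin (m + 1)) :
    #{j | colStart M j < zeroProfile M.T (zeroCount M.T i)} = zeroCount M.T i := by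
  refine (congrArg card (filter_congr fun j _ => ?_)).trans (rfl : _ = zeroCount M.T i)
  rw [← not_le, ← hM.eq_true_iff_zeroProfile_le, Bool.not_eq_true]

end IsMEW

theorem zeroProfile_lt_succ_iff (T : Tab m n) (v : ℕ) :
    zeroProfile T v < zeroProfile T (v + 1) ↔ ∃ i, zeroCount T i = v := by
  constructor
  · intro h
    by_contra! hne
    refine h.ne (congrArg card (filter_congr fun i _ => ?_))
    have := hne i
    omega
  · rintro ⟨i, rfl⟩
    refine card_lt_card ((ssubset_iff_of_subset fun i' hi' => ?_).2 ⟨i, by simp, by simp⟩)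
    simp only [mem_filter, mem_univ, true_and] at hi' ⊢
    omega

/-- The profile steps up at `v` exactly when some row has `v` zeros. Whether it does is read
off the column starts, and how far it steps off the row starts. -/
theorem IsMEW.zeroProfile_succ {M : MEW m n} (hM : IsMEW M) {v : ℕ} (hv : 1 ≤ v)
    (hvn : v ≤ n) :
    zeroProfile M.T (v + 1) =
      if #{j | colStart M j < zeroProfile M.T v} = v then #{i | rowStart M i < v}
      else zeroProfile M.T v := by
  by_cases hex : ∃ i, zeroCount M.T i = v
  · obtain ⟨i₀, rfl⟩ := hex
    rw [if_pos (hM.card_colStart_lt_zeroProfile i₀)]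
    refine congrArg card (filter_congr fun i _ => ⟨fun h => ?_, fun h => ?_⟩)
    · rcases eq_or_ne i 0 with rfl | hi
      · rw [hM.rowStart_zero]
        omega
      · have := hM.rowStart_lt_zeroCount hi
        omega
    · by_contra h'
      have := hM.zeroCount_le_rowStart (i := i) (i' := i₀) (by omega)
      omega
  simp only [not_exists] at hex
  have hstay : zeroProfile M.T (v + 1) = zeroProfile M.T v :=
    congrArg card (filter_congr fun i _ => by have := hex i; omega)
  rw [hstay, if_neg]
  by_cases hgt : ∃ i, v < zeroCount M.T i
  · obtain ⟨i₀, hi₀, hmin⟩ := exists_min_image (univ.filter fun i => v < zeroCount M.T i)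
      (zeroCount M.T) (by obtain ⟨i, hi⟩ := hgt; exact ⟨i, by simpa using hi⟩)
    simp only [mem_filter, mem_univ, true_and] at hi₀ hmin
    have : zeroProfile M.T v = zeroProfile M.T (zeroCount M.T i₀) :=
      congrArg card (filter_congr fun i _ => ⟨fun h => by omega, fun h => by
        by_contra h'
        have := hmin i (lt_of_le_of_ne (not_lt.1 h') (Ne.symm (hex i)))
        omega⟩)
    rw [this, hM.card_colStart_lt_zeroProfile]
    omega
  · simp only [not_exists, not_lt] at hgt
    have hall : zeroProfile M.T v = m + 1 := by
      rw [zeroProfile, filter_true_of_mem fun i _ => lt_of_le_of_ne (hgt i) (hex i)]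
      simp
    have : #{j | colStart M j < m + 1} = n + 1 := by
      rw [filter_true_of_mem fun j _ =>
        (hM.colStart_lt_oneCount j).trans_le (oneCount_le M.T j)]
      simp
    rw [hall, this]
    omega

section Uniqueness

variable {M₁ M₂ : MEW m n}

theorem zeroProfile_eq_of_starts (h₁ : IsMEW M₁) (h₂ : IsMEW M₂)
    (hrow : rowStart M₁ = rowStart M₂) (hcol : colStart M₁ = colStart M₂) {v : ℕ}
    (hv : v ≤ n + 1) : zeroProfile M₁.T v = zeroProfile M₂.T v := by
  induction v with
  | zero => simp [zeroProfile]
  | succ v ih =>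
    rcases Nat.eq_zero_or_pos v with rfl | hv₁
    · rw [h₁.1.zeroProfile_one, h₂.1.zeroProfile_one]
    · rw [h₁.zeroProfile_succ hv₁ (by omega), h₂.zeroProfile_succ hv₁ (by omega), ih (by omega),
        hrow, hcol]

theorem zeroCount_le_of_starts (h₁ : IsMEW M₁) (h₂ : IsMEW M₂)
    (hrow : rowStart M₁ = rowStart M₂)
    (hP : ∀ v ≤ n + 1, zeroProfile M₁.T v = zeroProfile M₂.T v) (i : Fin (m + 1)) :
    zeroCount M₂.T i ≤ zeroCount M₁.T i := by
  rcases eq_or_ne i 0 with rfl | hi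
  · simp [h₂.1.zeroCount_eq_zero_iff.2]
  by_contra! hlt
  have := zeroCount_le M₂.T i
  have hstep := (zeroProfile_lt_succ_iff M₁.T _).2 ⟨i, rfl⟩
  rw [hP _ (by omega), hP _ (by omega)] at hstep
  obtain ⟨i', hi'⟩ := (zeroProfile_lt_succ_iff M₂.T _).1 hstep
  have := h₂.zeroCount_le_rowStart (hi'.trans_lt hlt)
  have := h₁.rowStart_lt_zeroCount hi
  rw [hrow] at this
  omega

theorem zeroCount_eq_of_starts (h₁ : IsMEW M₁) (h₂ : IsMEW M₂)
    (hrow : rowStart M₁ = rowStart M₂)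
    (hP : ∀ v ≤ n + 1, zeroProfile M₁.T v = zeroProfile M₂.T v) :
    zeroCount M₁.T = zeroCount M₂.T :=
  funext fun i => le_antisymm
    (zeroCount_le_of_starts h₂ h₁ hrow.symm (fun v hv => (hP v hv).symm) i)
    (zeroCount_le_of_starts h₁ h₂ hrow hP i)

end Uniqueness

theorem leftmost_eq {T : Tab m n} {i : Fin (m + 1)} {j : Fin (n + 1)} (hj : T i j = true)
    (hmin : ∀ j' < j, T i j' = false) : leftmost T i = j := by
  refine le_antisymm (Nat.sInf_le ⟨j.2, hj⟩) (le_csInf ⟨j, j.2, hj⟩ ?_)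
  rintro k ⟨hk, hT⟩
  by_contra! hlt
  simp [hmin ⟨k, hk⟩ hlt] at hT

theorem topmost_eq {T : Tab m n} {i : Fin (m + 1)} {j : Fin (n + 1)} (hi : T i j = true)
    (hmin : ∀ i' < i, T i' j = false) : topmost T j = i := by
  refine le_antisymm (Nat.sInf_le ⟨i.2, hi⟩) (le_csInf ⟨i, i.2, hi⟩ ?_)
  rintro k ⟨hk, hT⟩
  by_contra! hlt
  simp [hmin ⟨k, hk⟩ hlt] at hT

theorem leftmost_step4_decide_le {z : Fin (m + 1) → ℕ} (hz : ∀ x, z x ≤ n + 1)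
    (hz₀ : ∀ x, z x = 0 → x = 0) (x : Fin (m + 1)) :
    leftmost (step4 (fun x j => decide (z x ≤ j) : Tab m n)) x = z x - 1 := by
  have := hz x
  refine leftmost_eq (j := ⟨z x - 1, by omega⟩) ?_ fun j' hj' => ?_
  · rcases Nat.eq_zero_or_pos (z x) with h | h
    · simp [step4, h]
      exact fun x' hx' h' => by simp [hz₀ x' h'] at hx'
    · simp [step4]
      exact Or.inr ⟨h, fun j' hj' => by omega⟩
  · have : (j' : ℕ) < z x - 1 := hj'
    simp [step4]
    exact ⟨fun h' => absurd h' (by omega), fun _ => ⟨⟨j' + 1, by omega⟩, rfl, by simp only; omega⟩⟩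

theorem topmost_step4_decide_lt {w : Fin (n + 1) → ℕ} (hw₀ : ∀ j, 1 ≤ w j)
    (hw : ∀ j, w j ≤ m + 1) (j : Fin (n + 1)) :
    topmost (step4 (fun i j => decide ((i : ℕ) < w j) : Tab m n)) j = w j - 1 := by
  have := hw₀ j
  have := hw j
  refine topmost_eq (i := ⟨w j - 1, by omega⟩) ?_ fun i' hi' => ?_
  · simp [step4]
    exact Or.inl ⟨by omega, fun i' hi' => by omega⟩
  · simp only [Fin.lt_def] at hi'
    simp only [step4, Bool.or_eq_false_iff, Bool.and_eq_false_iff, decide_eq_false_iff_not,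
      not_forall, Bool.not_eq_eq_eq_not, Bool.not_false, decide_eq_true_eq, not_lt]
    exact ⟨Or.inr ⟨⟨i' + 1, by omega⟩, rfl, by simp; omega⟩, Or.inl (by omega)⟩

theorem monotone_zeroCount_sortRows (T : Tab m n) : Monotone (zeroCount T ∘ sortRows T) :=
  Tuple.monotone_sort _

theorem monotone_oneCount_sortCols (T : Tab m n) : Monotone (oneCount T ∘ sortCols T) :=
  Tuple.monotone_sort _

namespace IsEW

variable {T : Tab m n}

theorem sortedTab_eq_decide_le (hT : IsEW T) :
    sortedTab T = (fun x y => decide (zeroCount T (sortRows T x) ≤ y) : Tab m n) := by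
  funext x y
  have hlow : ∀ y y', y' ≤ y → sortedTab T x y = false → sortedTab T x y' = false :=
    fun y y' hy'y hy => by
      by_contra h
      have := hT.eq_true_of_oneCount_le (monotone_oneCount_sortCols T hy'y)
        (i := sortRows T x) (by simpa [sortedTab] using h)
      simp [sortedTab, this] at hy
  have hcard : #{y | sortedTab T x y = false} = zeroCount T (sortRows T x) :=
    card_filter_comp_equiv (sortCols T) fun c => T (sortRows T x) c = false
  have := Fin.lt_card_filter_univ_iff_apply_of_imp (j := y) _ hlow
  rw [hcard] at this
  cases h : sortedTab T x y <;> simp_all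

theorem sortedTab_eq_decide_lt (hT : IsEW T) :
    sortedTab T = (fun x y => decide ((x : ℕ) < oneCount T (sortCols T y)) : Tab m n) := by
  funext x y
  have hlow : ∀ x x', x' ≤ x → sortedTab T x y = true → sortedTab T x' y = true :=
    fun x x' hx'x hx => hT.eq_true_of_zeroCount_le (monotone_zeroCount_sortRows T hx'x) hx
  have hcard : #{x | sortedTab T x y = true} = oneCount T (sortCols T y) :=
    card_filter_comp_equiv (sortRows T) fun r => T r (sortCols T y) = true
  have := Fin.lt_card_filter_univ_iff_apply_of_imp (j := x) _ hlow
  rw [hcard] at this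
  cases h : sortedTab T x y <;> simp_all

theorem leftmost_phi (hT : IsEW T) (x : Fin (m + 1)) :
    leftmost (phi T).T x = zeroCount T (sortRows T x) - 1 := by
  refine (congrArg (leftmost · x) (congrArg step4 hT.sortedTab_eq_decide_le)).trans
    (leftmost_step4_decide_le (fun _ => zeroCount_le _ _) (fun x hx => ?_) x)
  have h₀ := monotone_zeroCount_sortRows T (Fin.zero_le x)
  simp only [Function.comp_apply] at h₀
  rw [hx, Nat.le_zero, hT.zeroCount_eq_zero_iff] at h₀
  rw [hT.zeroCount_eq_zero_iff, ← h₀] at hx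
  exact (sortRows T).injective hx

theorem topmost_phi (hT : IsEW T) (y : Fin (n + 1)) :
    topmost (phi T).T y = oneCount T (sortCols T y) - 1 :=
  (congrArg (topmost · y) (congrArg step4 hT.sortedTab_eq_decide_lt)).trans
    (topmost_step4_decide_lt
      (fun y => card_pos.2 ⟨0, by simp [hT.1]⟩) (fun _ => oneCount_le _ _) y)

end IsEW

def layout (L : Fin (m + 1) → ℕ) (U : Fin (n + 1) → ℕ) (ρ : Equiv.Perm (Fin (m + 1)))
    (κ : Equiv.Perm (Fin (n + 1))) : Labelled m n :=
  ⟨fun i j => decide (L (ρ i) ≤ j ∧ U (κ j) ≤ i), ρ, κ⟩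

theorem expand_eq_layout (D : Labelled m n) (zrow : Fin (m + 1) → ℕ) (zcol : Fin (n + 1) → ℕ)
    (L : Fin (m + 1) → ℕ) (U : Fin (n + 1) → ℕ)
    (hL : ∀ x, leftmost D.T x - zrow (D.rl x) = L (D.rl x))
    (hU : ∀ y, topmost D.T y - zcol (D.cl y) = U (D.cl y)) :
    expand D zrow zcol = layout L U
      ((Tuple.sort fun x => toLex (L (D.rl x), (D.rl x : ℕ))).trans D.rl)
      ((Tuple.sort fun y => toLex (U (D.cl y), (D.cl y : ℕ))).trans D.cl) := by
  simp only [expand, layout, hL, hU]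
  rfl

section Layout

variable {L : Fin (m + 1) → ℕ} {U : Fin (n + 1) → ℕ} {ρ : Equiv.Perm (Fin (m + 1))}
  {κ : Equiv.Perm (Fin (n + 1))}

theorem leftmost_layout (hκ : Monotone (U ∘ κ)) {i : Fin (m + 1)}
    (h : L (ρ i) < #{j | U j ≤ i}) : leftmost (layout L U ρ κ).T i = L (ρ i) := by
  have hU : ∀ j, U (κ j) ≤ i ↔ (j : ℕ) < #{j | U j ≤ i} := fun j => by
    rw [← card_filter_comp_equiv κ fun j => U j ≤ i]
    exact (Tuple.lt_card_le_iff_apply_le_of_monotone hκ).symm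
  have hn := h.trans_le (card_le_univ _)
  rw [Fintype.card_fin] at hn
  refine leftmost_eq (j := ⟨L (ρ i), hn⟩) ?_ fun j hj => ?_
  · simpa [layout, hU] using h
  · have : (j : ℕ) < L (ρ i) := hj
    simp only [layout, decide_eq_false_iff_not, not_and, not_le]
    omega

theorem topmost_layout (hρ : Monotone (L ∘ ρ)) {j : Fin (n + 1)}
    (h : U (κ j) < #{i | L i ≤ j}) : topmost (layout L U ρ κ).T j = U (κ j) := by
  have hL : ∀ i, L (ρ i) ≤ j ↔ (i : ℕ) < #{i | L i ≤ j} := fun i => by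
    rw [← card_filter_comp_equiv ρ fun i => L i ≤ j]
    exact (Tuple.lt_card_le_iff_apply_le_of_monotone hρ).symm
  have hm := h.trans_le (card_le_univ _)
  rw [Fintype.card_fin] at hm
  refine topmost_eq (i := ⟨U (κ j), hm⟩) ?_ fun i hi => ?_
  · simpa [layout, hL] using h
  · have : (i : ℕ) < U (κ j) := hi
    simp only [layout, decide_eq_false_iff_not, not_and, not_le]
    omega

end Layout

namespace IsMEW

variable {M : MEW m n}

theorem rowStart_eq (hM : IsMEW M) (i : Fin (m + 1)) :
    rowStart M i = zeroCount M.T i - 1 - (etaRow M.T i - M.arow i - 1) := by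
  rcases eq_or_ne i 0 with rfl | hi
  · rw [hM.rowStart_zero, hM.1.zeroCount_eq_zero_iff.2 rfl, Nat.zero_sub]
  · have := etaRow_add_csZeroCount M.T i
    have := hM.2.2.1 i hi
    simp only [rowStart]
    omega

theorem colStart_eq (hM : IsMEW M) (j : Fin (n + 1)) :
    colStart M j = oneCount M.T j - 1 - (etaCol M.T j - M.acol j - 1) := by
  have := etaCol_add_csOneCount M.T j
  have := hM.2.2.2 j
  simp only [colStart]
  omega

theorem exists_Phi_eq_layout (hM : IsMEW M) :
    ∃ ρ κ, Monotone (fun i => toLex (rowStart M (ρ i), (ρ i : ℕ))) ∧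
      Monotone (fun j => toLex (colStart M (κ j), (κ j : ℕ))) ∧
      Phi M = layout (rowStart M) (colStart M) ρ κ := by
  refine ⟨_, _, ?_, ?_, expand_eq_layout _ _ _ (rowStart M) (colStart M)
    (fun x => by rw [hM.1.leftmost_phi, hM.rowStart_eq]; rfl)
    (fun y => by rw [hM.1.topmost_phi, hM.colStart_eq]; rfl)⟩
  · exact Tuple.monotone_sort fun x => toLex (rowStart M (sortRows M.T x), (sortRows M.T x : ℕ))
  · exact Tuple.monotone_sort fun y => toLex (colStart M (sortCols M.T y), (sortCols M.T y : ℕ))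

theorem zeroProfile_le_symm_apply (hM : IsMEW M) {ρ : Equiv.Perm (Fin (m + 1))}
    (hρ : Monotone fun i => toLex (rowStart M (ρ i), (ρ i : ℕ))) {i : Fin (m + 1)}
    (hi : i ≠ 0) : zeroProfile M.T (zeroCount M.T i) ≤ ρ.symm i := calc
  _ ≤ #{i' | toLex (rowStart M i', (i' : ℕ)) < toLex (rowStart M i, (i : ℕ))} := by
    refine card_le_card fun i' hi' => ?_
    simp only [mem_filter, mem_univ, true_and] at hi' ⊢
    rw [Prod.Lex.toLex_lt_toLex']
    rcases eq_or_ne i' 0 with rfl | hi'0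
    · exact ⟨by simp [hM.rowStart_zero], fun _ => Fin.pos_iff_ne_zero.2 hi⟩
    · have := hM.rowStart_lt_zeroCount hi'0
      have := hM.zeroCount_le_rowStart hi'
      exact ⟨by omega, fun _ => by omega⟩
  _ ≤ ρ.symm i := card_filter_lt_le_symm_apply (f := fun i => toLex (rowStart M i, (i : ℕ))) hρ i

theorem zeroCount_le_symm_apply (hM : IsMEW M) {κ : Equiv.Perm (Fin (n + 1))}
    (hκ : Monotone fun j => toLex (colStart M (κ j), (κ j : ℕ))) {i : Fin (m + 1)}
    {j : Fin (n + 1)} (h : M.T i j = true) : zeroCount M.T i ≤ κ.symm j := calc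
  _ ≤ #{j' | toLex (colStart M j', (j' : ℕ)) < toLex (colStart M j, (j : ℕ))} := by
    refine card_le_card fun j' hj' => ?_
    simp only [mem_filter, mem_univ, true_and] at hj' ⊢
    have := hM.colStart_lt_zeroProfile hj'
    rw [hM.eq_true_iff_zeroProfile_le] at h
    exact Prod.Lex.toLex_lt_toLex.2 (Or.inl (by omega))
  _ ≤ κ.symm j := card_filter_lt_le_symm_apply (f := fun j => toLex (colStart M j, (j : ℕ))) hκ j

theorem leftmost_Phi (hM : IsMEW M) {i : Fin (m + 1)} (hi : i ≠ 0) :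
    leftmost (Phi M).T ((Phi M).rl.symm i) = rowStart M i := by
  obtain ⟨ρ, κ, hρ, hκ, hΦ⟩ := hM.exists_Phi_eq_layout
  rw [hΦ]
  refine (leftmost_layout (Prod.Lex.monotone_fst_ofLex.comp hκ) ?_).trans
    (congrArg _ (ρ.apply_symm_apply i))
  rw [show (layout (rowStart M) (colStart M) ρ κ).rl = ρ from rfl, ρ.apply_symm_apply]
  refine (hM.rowStart_lt_zeroCount hi).trans_le (card_le_card fun j hj => ?_)
  simp only [mem_filter, mem_univ, true_and] at hj ⊢
  exact (hM.colStart_lt_zeroProfile hj).le.trans (hM.zeroProfile_le_symm_apply hρ hi)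

theorem topmost_Phi (hM : IsMEW M) (j : Fin (n + 1)) :
    topmost (Phi M).T ((Phi M).cl.symm j) = colStart M j := by
  obtain ⟨ρ, κ, hρ, hκ, hΦ⟩ := hM.exists_Phi_eq_layout
  rw [hΦ]
  refine (topmost_layout (Prod.Lex.monotone_fst_ofLex.comp hρ) ?_).trans
    (congrArg _ (κ.apply_symm_apply j))
  rw [show (layout (rowStart M) (colStart M) ρ κ).cl = κ from rfl, κ.apply_symm_apply]
  refine (hM.colStart_lt_oneCount j).trans_le (card_le_card fun i hi => ?_)
  simp only [mem_filter, mem_univ, true_and] at hi ⊢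
  rcases eq_or_ne i 0 with rfl | hi'
  · simp [hM.rowStart_zero]
  · exact (hM.rowStart_lt_zeroCount hi').le.trans (hM.zeroCount_le_symm_apply hκ hi)

end IsMEW

/-- The map `Φ : MEW → LPara` is injective: if
`Φ(T₁, a) = Φ(T₂, b)` then `T₁ = T₂` and `a = b`. -/
theorem Phi_injective {m n : ℕ} (M₁ M₂ : MEW m n) (h₁ : IsMEW M₁) (h₂ : IsMEW M₂)
    (h : Phi M₁ = Phi M₂) :
    M₁.T = M₂.T ∧ M₁.arow = M₂.arow ∧ M₁.acol = M₂.acol := by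
  have hrow : rowStart M₁ = rowStart M₂ := funext fun i => by
    rcases eq_or_ne i 0 with rfl | hi
    · rw [h₁.rowStart_zero, h₂.rowStart_zero]
    · rw [← h₁.leftmost_Phi hi, ← h₂.leftmost_Phi hi, h]
  have hcol : colStart M₁ = colStart M₂ := funext fun j => by
    rw [← h₁.topmost_Phi j, ← h₂.topmost_Phi j, h]
  have hP := fun v (hv : v ≤ n + 1) => zeroProfile_eq_of_starts h₁ h₂ hrow hcol hv
  have hZ := zeroCount_eq_of_starts h₁ h₂ hrow hP
  have hT : M₁.T = M₂.T := funext₂ fun i j => Bool.eq_iff_iff.2 <| by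
    rw [h₁.eq_true_iff_zeroProfile_le, h₂.eq_true_iff_zeroProfile_le, hZ,
      hP _ (zeroCount_le _ _), hcol]
  refine ⟨hT, funext fun i => ?_, funext fun j => ?_⟩
  · have := congrFun hrow i
    simp only [rowStart, hT] at this
    omega
  · have := congrFun hcol j
    simp only [colStart, hT] at this
    omega

end EWPaper
end

section
/- In a rectangular EW-tableau T with m rows and n columns, every row below the first contains at least one non-cornersupport 0, and every column contains at least one non-cornersupport 1; equivalently, η_i(T) ≥ 1 for all 1 ≤ i ≤ m+n-1, so the definition of marked rectangular EW-tableaux is well-defined. -/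
/-! The 2×2 condition says that the supports of the rows form a chain under inclusion. For a 0
of row `i`, let `b` be the row with least support among those not contained in row `i`, and `k`
a column where `b` has a 1 and row `i` a 0: a rectangle making `(i, k)` cornersupport would give
another such row missing `k`. Dually, the row with least support among those with a 1 in
column `j` carries a non-cornersupport 1 there. -/

theorem Finset.exists_forall_subset_of_total {ι α : Type*} (f : ι → Finset α)
    (htot : ∀ i j, f i ⊆ f j ∨ f j ⊆ f i) {S : Finset ι} (hS : S.Nonempty) :
    ∃ a ∈ S, ∀ b ∈ S, f a ⊆ f b := by
  obtain ⟨a, ha, hmin⟩ := S.exists_min_image (fun i => (f i).card) hS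
  refine ⟨a, ha, fun b hb => (htot a b).elim id fun hba => ?_⟩
  exact (Finset.eq_of_subset_of_card_le hba (hmin b hb)).superset

namespace EWPaper

variable {m n : ℕ} {T : Tab m n}

def rowSupport (T : Tab m n) (i : Fin (m + 1)) : Finset (Fin (n + 1)) :=
  {j | T i j = true}

@[simp]
theorem mem_rowSupport {i : Fin (m + 1)} {j : Fin (n + 1)} :
    j ∈ rowSupport T i ↔ T i j = true := by
  simp [rowSupport]

theorem IsEW.rowSupport_total (hT : IsEW T) (i i' : Fin (m + 1)) :
    rowSupport T i ⊆ rowSupport T i' ∨ rowSupport T i' ⊆ rowSupport T i := by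
  by_contra! h
  obtain ⟨⟨j, hj, hj'⟩, ⟨j', hj'i', hj'i⟩⟩ := And.imp Finset.not_subset.mp Finset.not_subset.mp h
  simp only [mem_rowSupport, Bool.not_eq_true] at hj hj' hj'i' hj'i
  have hii : i ≠ i' := by rintro rfl; simp_all
  have hjj : j ≠ j' := by rintro rfl; simp_all
  simpa [hj', hj'i] using hT.2.2 i i' j j' hii hjj hj hj'i'

theorem exists_false_not_cornersupport
    (htot : ∀ i i', rowSupport T i ⊆ rowSupport T i' ∨ rowSupport T i' ⊆ rowSupport T i)
    {a i : Fin (m + 1)} {j : Fin (n + 1)} (ha : T a j = true) (hi : T i j = false) :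
    ∃ j, T i j = false ∧ ¬ Cornersupport T i j := by
  have mem_S {b} : b ∈ ({b | ¬ rowSupport T b ⊆ rowSupport T i} : Finset _) ↔
      ∃ k, T b k = true ∧ T i k = false := by
    simp [Finset.not_subset]
  obtain ⟨b, hb, hmin⟩ :=
    Finset.exists_forall_subset_of_total (rowSupport T) htot ⟨a, mem_S.mpr ⟨j, ha, hi⟩⟩
  obtain ⟨k, hbk, hik⟩ := mem_S.mp hb
  refine ⟨k, hik, fun ⟨i', j', _, _, hi'j', hi'k, hij'⟩ => ?_⟩
  rw [hik, ne_eq, Bool.not_eq_false] at hi'j'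
  rw [hik] at hi'k hij'
  have hbi' := hmin i' (mem_S.mpr ⟨j', hi'j', hij'⟩) (mem_rowSupport.mpr hbk)
  simp [hi'k] at hbi'

theorem exists_true_not_cornersupport
    (htot : ∀ i i', rowSupport T i ⊆ rowSupport T i' ∨ rowSupport T i' ⊆ rowSupport T i)
    {a : Fin (m + 1)} {j : Fin (n + 1)} (ha : T a j = true) :
    ∃ i, T i j = true ∧ ¬ Cornersupport T i j := by
  obtain ⟨b, hb, hmin⟩ := Finset.exists_forall_subset_of_total (rowSupport T) htot
    (S := {b | T b j = true}) ⟨a, by simpa using ha⟩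
  rw [Finset.mem_filter_univ] at hb
  refine ⟨b, hb, fun ⟨i', j', _, _, hi'j', hi'j, hbj'⟩ => ?_⟩
  rw [hb, ne_eq, Bool.not_eq_true] at hi'j'
  rw [hb] at hi'j hbj'
  have hi' := hmin i' (by simpa using hi'j) (mem_rowSupport.mpr hbj')
  simp [hi'j'] at hi'

theorem one_le_etaRow_iff {i : Fin (m + 1)} :
    1 ≤ etaRow T i ↔ ∃ j, T i j = false ∧ ¬ Cornersupport T i j := by
  simp [etaRow, Nat.one_le_iff_ne_zero]

theorem one_le_etaCol_iff {j : Fin (n + 1)} :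
    1 ≤ etaCol T j ↔ ∃ i, T i j = true ∧ ¬ Cornersupport T i j := by
  simp [etaCol, Nat.one_le_iff_ne_zero]

/-- In a rectangular EW-tableau every row below the first
contains at least one non-cornersupport 0 and every column contains at least one
non-cornersupport 1; equivalently `η_i(T) ≥ 1` for every row below the first and
for every column, so marked rectangular EW-tableaux are well-defined. -/
theorem eta_pos {m n : ℕ} (T : Tab m n) (hT : IsEW T) :
    (∀ i : Fin (m + 1), i ≠ 0 → ∃ j, T i j = false ∧ ¬ Cornersupport T i j) ∧
    (∀ j : Fin (n + 1), ∃ i, T i j = true ∧ ¬ Cornersupport T i j) ∧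
    (∀ i : Fin (m + 1), i ≠ 0 → 1 ≤ etaRow T i) ∧
    (∀ j : Fin (n + 1), 1 ≤ etaCol T j) := by
  have hrow (i : Fin (m + 1)) (hi : i ≠ 0) : ∃ j, T i j = false ∧ ¬ Cornersupport T i j := by
    obtain ⟨j, hj⟩ := hT.2.1 i hi
    exact exists_false_not_cornersupport hT.rowSupport_total (hT.1 j) hj
  have hcol (j : Fin (n + 1)) : ∃ i, T i j = true ∧ ¬ Cornersupport T i j :=
    exists_true_not_cornersupport hT.rowSupport_total (hT.1 j)
  exact ⟨hrow, hcol, fun i hi => one_le_etaRow_iff.mpr (hrow i hi),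
    fun j => one_le_etaCol_iff.mpr (hcol j)⟩

end EWPaper
end

section
/- Step 4 of the map φ is invertible on sorted EW-tableaux: let T' be an m×n 0/1 tableau whose 1s form a Ferrers shape in the top right corner (only 0s to the left of every 0, only 1s above every 1) with top row all 1s and every other row containing a 0, and let R be defined by R_{ij}=1 iff (T'_{ij}=1 and (i=m or T'_{i+1,j}=0)) or (T'_{ij}=0 and (j=n or T'_{i,j+1}=1)). Then T' is recovered from R by the following rule: in the first row of R change every 0 to a 1, and in every other row replace the leftmost 1 by a 0 and change all entries to its right to 1s. -/
/- A row `i ≠ 0` of `T'` is 0 up to some column `d` and 1 after it. On the columns `≤ d`,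
Step 4 turns it into 0s with a single 1 at `d`: the last 0 is followed by a 1 or by the
border, every earlier 0 by a 0. So the leftmost 1 of `R` in row `i` marks the last 0 of
`T'`, and the rule rebuilds the row. -/

/- Combinatorial objects from "EW-tableaux and parallelogram polyominoes".
A tableau of type `(m+1, n+1)` (i.e. with `m+1` rows and `n+1` columns) is a
0/1-filling, encoded as a function to `Bool` (`true` = 1).  Rows are indexed
top to bottom, columns left to right, both starting at `0`.  The row labelled
`v i` (for `i < m+1`) and the column labelled `v ((m+1)+j)` (for `j < n+1`)
are recorded through permutations `rl`, `cl` of `Fin (m+1)`, `Fin (n+1)`. -/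

namespace EWPaper

variable {m n : ℕ}

theorem leftmost_eq_of_forall_lt {T : Tab m n} {i : Fin (m + 1)} {d : Fin (n + 1)}
    (hd : T i d = true) (hlt : ∀ j, j < d → T i j = false) : leftmost T i = d := by
  have hmem : (d : ℕ) ∈ {k : ℕ | ∃ h : k < n + 1, T i ⟨k, h⟩ = true} := ⟨d.2, hd⟩
  refine le_antisymm (Nat.sInf_le hmem) (le_csInf ⟨d, hmem⟩ fun k ⟨hk, hTk⟩ => ?_)
  by_contra! hkd
  simp [hlt ⟨k, hk⟩ hkd] at hTk

theorem exists_forall_eq_false_iff_le {T : Tab m n} {i : Fin (m + 1)}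
    (hmono : ∀ j j', j ≤ j' → T i j = true → T i j' = true) (hzero : ∃ j, T i j = false) :
    ∃ d, ∀ j, T i j = false ↔ j ≤ d := by
  obtain ⟨j₀, hj₀⟩ := hzero
  obtain ⟨d, hd, hmax⟩ := (Finset.univ.filter fun j => T i j = false).exists_max_image id
    ⟨j₀, by simpa using hj₀⟩
  refine ⟨d, fun j => ⟨fun hj => hmax j (by simpa using hj), fun hjd => ?_⟩⟩
  simp only [Finset.mem_filter, Finset.mem_univ, true_and] at hd
  by_contra hj
  simp [hmono j d hjd (by simpa using hj)] at hd

theorem step4_of_eq_false {T : Tab m n} {i : Fin (m + 1)} {j : Fin (n + 1)}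
    (h : T i j = false) :
    step4 T i j = decide (∀ j' : Fin (n + 1), (j' : ℕ) = j + 1 → T i j' = true) := by
  simp [step4, h]

theorem step4_eq_decide_eq_of_le {T : Tab m n} {i : Fin (m + 1)} {d j : Fin (n + 1)}
    (hd : ∀ j, T i j = false ↔ j ≤ d) (hj : j ≤ d) : step4 T i j = decide (j = d) := by
  rw [step4_of_eq_false ((hd j).2 hj)]
  have hdn := d.isLt
  refine Bool.decide_congr ⟨fun hnext => ?_, fun hjd j' hj' => ?_⟩
  · by_contra hne
    have hjd : (j : ℕ) < d := Fin.lt_def.1 (lt_of_le_of_ne hj hne)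
    have hnext' := hnext ⟨j + 1, by omega⟩ rfl
    rw [(hd _).2 (Fin.le_def.2 (by simp only; omega))] at hnext'
    exact Bool.false_ne_true hnext'
  · subst hjd
    by_contra hT
    have := Fin.le_def.1 ((hd j').1 (by simpa using hT))
    omega

theorem leftmost_step4_eq {T : Tab m n} {i : Fin (m + 1)} {d : Fin (n + 1)}
    (hd : ∀ j, T i j = false ↔ j ≤ d) : leftmost (step4 T) i = d :=
  leftmost_eq_of_forall_lt (by simp [step4_eq_decide_eq_of_le hd le_rfl])
    fun j hj => by simp [step4_eq_decide_eq_of_le hd hj.le, hj.ne]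

theorem step4_inverse_general {m n : ℕ} (T' : Tab m n)
    (h1 : ∀ j, T' 0 j = true)
    (h2 : ∀ i : Fin (m + 1), i ≠ 0 → ∃ j, T' i j = false)
    (h3 : ∀ (i : Fin (m + 1)) (j j' : Fin (n + 1)), j ≤ j' →
      T' i j = true → T' i j' = true) :
    ∀ (i : Fin (m + 1)) (j : Fin (n + 1)),
      (if i = 0 then true
        else if (j : ℕ) < leftmost (step4 T') i then step4 T' i j
        else decide (leftmost (step4 T') i < (j : ℕ))) = T' i j := by
  intro i j
  by_cases hi : i = 0
  · simp [hi, h1]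
  obtain ⟨d, hd⟩ := exists_forall_eq_false_iff_le (h3 i) (h2 i hi)
  rw [if_neg hi, leftmost_step4_eq hd]
  have hrow : T' i j = decide (d < j) := by
    rw [Bool.eq_iff_iff, decide_eq_true_iff, ← not_le, ← hd]
    simp
  rw [hrow]
  split_ifs with hjd
  · have hjd : j < d := Fin.lt_def.2 hjd
    rw [step4_eq_decide_eq_of_le hd hjd.le]
    simp [hjd.ne, hjd.not_gt]
  · simp

/-- Step 4 of `φ` is invertible on sorted EW-tableaux: if the
1s of `T'` form a Ferrers shape in the top right corner (1s in each row form a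
suffix, 1s in each column form a prefix, the rows' numbers of 1s weakly decrease
from top to bottom), the top row is all 1s, and every other row contains a 0,
then `T'` is recovered from `R = step4 T'` by turning every entry of the first
row into a 1 and, in every other row, replacing the leftmost 1 by a 0, turning
every entry to its right into a 1, and keeping the entries to its left. -/
theorem step4_inverse {m n : ℕ} (T' : Tab m n)
    (h1 : ∀ j, T' 0 j = true)
    (h2 : ∀ i : Fin (m + 1), i ≠ 0 → ∃ j, T' i j = false)
    (h3 : ∀ (i : Fin (m + 1)) (j j' : Fin (n + 1)), j ≤ j' →
      T' i j = true → T' i j' = true)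
    (h4 : ∀ (i i' : Fin (m + 1)) (j : Fin (n + 1)), i' ≤ i →
      T' i j = true → T' i' j = true)
    (h5 : ∀ i i' : Fin (m + 1), i ≤ i' →
      (Finset.univ.filter fun j => T' i' j = true).card ≤
        (Finset.univ.filter fun j => T' i j = true).card) :
    ∀ (i : Fin (m + 1)) (j : Fin (n + 1)),
      (if i = 0 then true
        else if (j : ℕ) < leftmost (step4 T') i then step4 T' i j
        else decide (leftmost (step4 T') i < (j : ℕ))) = T' i j :=
  step4_inverse_general T' h1 h2 h3

end EWPaper
end
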